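/- arXiv:2507.02999 — 2 statements merged into one kernel-verified Lean document; each statement's English description precedes it below -/
import Mathlib

section
/- Let d ≥ 1 be a natural number, a > 0 and r ≥ 0 real numbers. Then ∫₀^r (sinh(a·t)/a)^{d−1} dt ≥ (r^d / d) · e^{−(d−1)·a·r}. -/
/-! Since `sinh u ≥ u` for `u ≥ 0`, the integrand dominates `t ^ (d - 1)`, so the integral is at
least the Euclidean value `r ^ d / d`; the factor `exp (-(d - 1) a r)` is at most `1`. -/

open Real

lemma le_sinh_mul_div {a t : ℝ} (ha : 0 < a) (ht : 0 ≤ t) : t ≤ sinh (a * t) / a := by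
  rw [le_div_iff₀ ha, mul_comm]
  exact self_le_sinh_iff.2 (mul_nonneg ha.le ht)

lemma integral_pow_le_integral_sinh_mul_div_pow (n : ℕ) {a r : ℝ} (ha : 0 < a) (hr : 0 ≤ r) :
    ∫ t in (0:ℝ)..r, t ^ n ≤ ∫ t in (0:ℝ)..r, (sinh (a * t) / a) ^ n := by
  refine intervalIntegral.integral_mono_on hr
    ((by fun_prop : Continuous _).intervalIntegrable _ _)
    ((by fun_prop : Continuous _).intervalIntegrable _ _) fun t ht => ?_
  exact pow_le_pow_left₀ ht.1 (le_sinh_mul_div ha ht.1) n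

/-- For `d ≥ 1`, `a > 0`, `r ≥ 0`:
`∫₀^r (sinh (a t) / a)^(d-1) dt ≥ (r^d / d) e^(-(d-1) a r)`. -/
theorem integral_sinh_pow_ge (d : ℕ) (hd : 1 ≤ d) (a r : ℝ) (ha : 0 < a) (hr : 0 ≤ r) :
    r ^ d / d * Real.exp (-(((d : ℝ) - 1) * a * r)) ≤
      ∫ t in (0:ℝ)..r, (Real.sinh (a * t) / a) ^ (d - 1) := by
  have hd' : (0 : ℝ) ≤ d - 1 := sub_nonneg.2 (by exact_mod_cast hd)
  have hexp : exp (-(((d : ℝ) - 1) * a * r)) ≤ 1 :=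
    exp_le_one_iff.2 (neg_nonpos.2 (mul_nonneg (mul_nonneg hd' ha.le) hr))
  calc r ^ d / d * exp (-(((d : ℝ) - 1) * a * r)) ≤ r ^ d / d :=
        mul_le_of_le_one_right (by positivity) hexp
    _ = ∫ t in (0:ℝ)..r, t ^ (d - 1) := by
        rw [integral_pow, Nat.sub_add_cancel hd, zero_pow (by omega), sub_zero,
          Nat.cast_sub hd, Nat.cast_one, sub_add_cancel]
    _ ≤ _ := integral_pow_le_integral_sinh_mul_div_pow (d - 1) ha hr
end

section
/- Let (X, d) be a nonempty compact metric space equipped with a finite Borel measure μ, let L > 0, B > 0, ε > 0, and let v > 0 be such that every closed ball of radius ε/(4L) in X has μ-measure at least v. Then there exists a finite family G of functions from X to ℝ with cardinality at most (⌈4B/ε⌉ + 1)^{⌊μ(X)/v⌋} such that for every L-Lipschitz function f : X → ℝ with |f(x)| ≤ B for all x, there exists g ∈ G with sup_{x ∈ X} |f(x) − g(x)| ≤ ε. Equivalently, log N(F, ε, ‖·‖_∞) ≤ (μ(X)/v) · log(⌈4B/ε⌉ + 1) for the class F of L-Lipschitz functions bounded by B. -/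
/-!
Put `r = ε / (4L)`. The closed `r`-balls around the points of a `2r`-separated set are pairwise
disjoint and each has mass at least `v`, so such a set has at most `⌊μ(X)/v⌋` points; a maximal one
is therefore a finite `2r`-net `N`. An `L`-Lipschitz `f` is within `2Lr = ε/2` of `f ∘ c`, where
`c` sends each point to a point of `N` at distance at most `2r`, and the values of `f` on `N` can be rounded to a grid
of mesh `ε/2` in `[-B, B]` with `⌈4B/ε⌉ + 1` points. The functions `σ ∘ c`, for `σ` from `N` to the
grid, form the cover.
-/

open MeasureTheory Metric
open scoped NNReal ENNReal

namespace Metric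

theorem IsSeparated.pairwiseDisjoint_closedBall {X : Type*} [PseudoMetricSpace X] {C : Set X}
    {r : ℝ≥0} (hC : IsSeparated (2 * r : ℝ≥0) C) : C.PairwiseDisjoint (closedBall · r) := by
  intro x hx y hy hxy
  apply closedBall_disjoint_closedBall
  have hsep : ((2 * r : ℝ≥0) : ℝ≥0∞) < edist x y := hC hx hy hxy
  rw [edist_dist, ENNReal.coe_nnreal_eq,
    ENNReal.ofReal_lt_ofReal_iff_of_nonneg (by positivity)] at hsep
  push_cast at hsep
  linarith

section VolumePacking

variable {X : Type*} [PseudoMetricSpace X] [MeasurableSpace X] [OpensMeasurableSpace X]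
  {μ : Measure X} {r : ℝ≥0} {m : ℝ≥0∞}

theorem IsSeparated.card_mul_le_measure_univ {t : Finset X}
    (ht : IsSeparated (2 * r : ℝ≥0) (t : Set X))
    (hball : ∀ x ∈ t, m ≤ μ (closedBall x r)) : t.card * m ≤ μ Set.univ :=
  calc t.card * m ≤ ∑ x ∈ t, μ (closedBall x r) := by
        simpa [nsmul_eq_mul] using t.card_nsmul_le_sum _ m hball
    _ = μ (⋃ x ∈ t, closedBall x r) :=
        (measure_biUnion_finset ht.pairwiseDisjoint_closedBall
          fun _ _ ↦ measurableSet_closedBall).symm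
    _ ≤ μ Set.univ := measure_mono (Set.subset_univ _)

theorem IsSeparated.card_le_of_le_measure_closedBall [IsFiniteMeasure μ] {v : ℝ} (hv : 0 < v)
    (hball : ∀ x, ENNReal.ofReal v ≤ μ (closedBall x r)) {t : Finset X}
    (ht : IsSeparated (2 * r : ℝ≥0) (t : Set X)) : t.card ≤ ⌊(μ Set.univ).toReal / v⌋₊ := by
  have hmass := ht.card_mul_le_measure_univ fun x _ ↦ hball x
  rw [← ENNReal.ofReal_natCast, ← ENNReal.ofReal_mul (by positivity),
    ENNReal.ofReal_le_iff_le_toReal (measure_ne_top μ _)] at hmass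
  exact Nat.le_floor ((le_div_iff₀ hv).2 hmass)

theorem packingNumber_two_mul_le_of_le_measure_closedBall [IsFiniteMeasure μ] {v : ℝ}
    (hv : 0 < v)
    (hball : ∀ x, ENNReal.ofReal v ≤ μ (closedBall x r)) :
    packingNumber (2 * r) (Set.univ : Set X) ≤ ⌊(μ Set.univ).toReal / v⌋₊ := by
  refine iSup₂_le fun C _ ↦ iSup_le fun hC ↦ ?_
  by_contra! hlarge
  obtain ⟨t, htC, htcard⟩ := Set.exists_subset_encard_eq (Order.add_one_le_of_lt hlarge)
  have htfin : t.Finite := Set.finite_of_encard_le_coe htcard.le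
  have hcard := IsSeparated.card_le_of_le_measure_closedBall hv hball (t := htfin.toFinset)
    (by simpa using hC.subset htC)
  rw [htfin.encard_eq_coe_toFinset_card] at htcard
  norm_cast at htcard
  omega

end VolumePacking

theorem exists_finset_isCover_card_le_of_packingNumber_le {X : Type*} [PseudoEMetricSpace X]
    {ε : ℝ≥0} {A : Set X} {M : ℕ} (h : packingNumber ε A ≤ M) :
    ∃ N : Finset X, N.card ≤ M ∧ IsCover ε A (N : Set X) := by
  have hfin : packingNumber ε A ≠ ⊤ := ne_top_of_le_ne_top (by simp) h
  have hcard := (encard_maximalSeparatedSet hfin).trans_le h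
  have hN : (maximalSeparatedSet ε A).Finite := Set.finite_of_encard_le_coe hcard
  refine ⟨hN.toFinset, ?_, by simpa using isCover_maximalSeparatedSet hfin⟩
  rw [hN.encard_eq_coe_toFinset_card] at hcard
  exact_mod_cast hcard

theorem exists_finset_isCover_Icc (B : ℝ) {δ : ℝ≥0} (hδ : 0 < δ) :
    ∃ Q : Finset ℝ, Q.card ≤ ⌈2 * B / δ⌉₊ + 1 ∧ IsCover δ (Set.Icc (-B) B) (Q : Set ℝ) := by
  refine ⟨(Finset.range (⌈2 * B / δ⌉₊ + 1)).image fun i : ℕ ↦ -B + i * δ,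
    Finset.card_image_le.trans (Finset.card_range _).le,
    isCover_iff_subset_iUnion_closedBall.2 fun a ⟨hBa, haB⟩ ↦ ?_⟩
  have hδ' : (0 : ℝ) < δ := hδ
  set i := ⌊(a + B) / δ⌋₊
  have hi_le : (i : ℝ) * δ ≤ a + B :=
    (le_div_iff₀ hδ').1 (Nat.floor_le (div_nonneg (by linarith) hδ'.le))
  have hi_lt : a + B < (i + 1) * δ := (div_lt_iff₀ hδ').1 (Nat.lt_floor_add_one _)
  have hik : i < ⌈2 * B / δ⌉₊ + 1 :=
    Nat.lt_succ_of_le <| (Nat.floor_le_ceil _).trans <| Nat.ceil_mono <| by gcongr; linarith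
  simp only [Set.mem_iUnion, mem_closedBall, Real.dist_eq, Finset.coe_image, Finset.coe_range,
    Set.mem_image, Set.mem_Iio]
  exact ⟨_, ⟨i, hik, rfl⟩, abs_le.2 ⟨by linarith, by linarith⟩⟩

theorem exists_finset_approx_lipschitz_of_isCover {X : Type*} [PseudoMetricSpace X]
    {N : Finset X} {Q : Finset ℝ} {ρ δ : ℝ≥0} {L B : ℝ} (hL : 0 ≤ L)
    (hN : IsCover ρ Set.univ (N : Set X)) (hQ : IsCover δ (Set.Icc (-B) B) (Q : Set ℝ)) :
    ∃ G : Finset (X → ℝ), G.card ≤ Q.card ^ N.card ∧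
      ∀ f : X → ℝ, (∀ x y : X, |f x - f y| ≤ L * dist x y) → (∀ x : X, |f x| ≤ B) →
        ∃ g ∈ G, ∀ x : X, |f x - g x| ≤ L * ρ + δ := by
  classical
  choose c hcN hc using fun x : X ↦ by
    simpa using isCover_iff_subset_iUnion_closedBall.1 hN (Set.mem_univ x)
  let extend : (N → Q) → X → ℝ := fun σ x ↦ σ ⟨c x, hcN x⟩
  refine ⟨Finset.univ.image extend, ?_, fun f hf hfB ↦ ?_⟩
  · calc (Finset.univ.image extend).card ≤ Fintype.card (N → Q) := Finset.card_image_le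
      _ = Q.card ^ N.card := by simp
  choose σ hσQ hσ using fun y : N ↦ by
    simpa [Real.dist_eq] using isCover_iff_subset_iUnion_closedBall.1 hQ (abs_le.1 (hfB y))
  refine ⟨extend fun y ↦ ⟨σ y, hσQ y⟩, Finset.mem_image_of_mem _ (Finset.mem_univ _), fun x ↦ ?_⟩
  calc |f x - σ ⟨c x, hcN x⟩| ≤ |f x - f (c x)| + |f (c x) - σ ⟨c x, hcN x⟩| := abs_sub_le _ _ _
    _ ≤ L * ρ + δ := add_le_add ((hf _ _).trans (by gcongr; exact hc x)) (hσ ⟨c x, hcN x⟩)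

end Metric

theorem lipschitz_class_covering_of_measure_general
    {X : Type*} [MetricSpace X] [MeasurableSpace X] [BorelSpace X]
    (μ : Measure X) [IsFiniteMeasure μ] (L B ε v : ℝ)
    (hL : 0 < L) (hε : 0 < ε) (hv : 0 < v)
    (hball : ∀ x : X, ENNReal.ofReal v ≤ μ (closedBall x (ε / (4 * L)))) :
    ∃ G : Finset (X → ℝ), G.card ≤ (⌈4 * B / ε⌉₊ + 1) ^ ⌊(μ Set.univ).toReal / v⌋₊ ∧
      ∀ f : X → ℝ, (∀ x y : X, |f x - f y| ≤ L * dist x y) → (∀ x : X, |f x| ≤ B) →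
        ∃ g ∈ G, ∀ x : X, |f x - g x| ≤ ε := by
  set r := (ε / (4 * L)).toNNReal
  have hr : (r : ℝ) = ε / (4 * L) := Real.coe_toNNReal _ (by positivity)
  set δ := (ε / 2).toNNReal
  have hδ : (δ : ℝ) = ε / 2 := Real.coe_toNNReal _ (by positivity)
  obtain ⟨N, hNcard, hN⟩ := exists_finset_isCover_card_le_of_packingNumber_le <|
    packingNumber_two_mul_le_of_le_measure_closedBall hv (r := r) (by rwa [hr])
  obtain ⟨Q, hQcard, hQ⟩ := exists_finset_isCover_Icc B (δ := δ) (by simpa [δ] using hε)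
  obtain ⟨G, hGcard, hG⟩ := exists_finset_approx_lipschitz_of_isCover hL.le hN hQ
  refine ⟨G, hGcard.trans ?_, fun f hf hfB ↦ ?_⟩
  · have hgrid : 2 * B / δ = 4 * B / ε := by rw [hδ]; field_simp; ring
    rw [hgrid] at hQcard
    exact (Nat.pow_le_pow_left hQcard _).trans (Nat.pow_le_pow_right (by omega) hNcard)
  · obtain ⟨g, hgG, hg⟩ := hG f hf hfB
    refine ⟨g, hgG, fun x ↦ (hg x).trans_eq ?_⟩
    push_cast
    rw [hr, hδ]
    field_simp
    ring

/-- Combined covering bound (Theorems 1 + 2): on a compact metric measure space in which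
every closed ball of radius `ε/(4L)` has measure at least `v > 0`, the class of
`L`-Lipschitz functions bounded by `B` admits an `ε`-cover in the sup norm of
cardinality at most `(⌈4B/ε⌉ + 1)^⌊μ(X)/v⌋`. -/
theorem lipschitz_class_covering_of_measure
    {X : Type*} [MetricSpace X] [Nonempty X] [CompactSpace X] [MeasurableSpace X] [BorelSpace X]
    (μ : Measure X) [IsFiniteMeasure μ] (L B ε v : ℝ)
    (hL : 0 < L) (hB : 0 < B) (hε : 0 < ε) (hv : 0 < v)
    (hball : ∀ x : X, ENNReal.ofReal v ≤ μ (closedBall x (ε / (4 * L)))) :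
    ∃ G : Finset (X → ℝ), G.card ≤ (⌈4 * B / ε⌉₊ + 1) ^ ⌊(μ Set.univ).toReal / v⌋₊ ∧
      ∀ f : X → ℝ, (∀ x y : X, |f x - f y| ≤ L * dist x y) → (∀ x : X, |f x| ≤ B) →
        ∃ g ∈ G, ∀ x : X, |f x - g x| ≤ ε :=
  lipschitz_class_covering_of_measure_general μ L B ε v hL hε hv hball
end
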